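/- Let D_i ∈ End(F) act on the free algebra F by D_i(1) = 0 and D_i(w_{i_1}⋯w_{i_k}) = δ_{i,i_k} w_{i_1}⋯w_{i_{k-1}}. Then D_i is a twisted derivation for the quantum shuffle product: D_i(w_j) = δ_{ij} and D_i(x ⋆ y) = q_{α_i, μ} D_i(x) ⋆ y + x ⋆ D_i(y) for all x ∈ F and homogeneous y ∈ F_μ. -/

import Mathlib

/-- The free associative algebra `F` on generators `w_i` (`i ∈ I`), realized as
the monoid algebra of the free monoid on `I` (words = lists). -/
abbrev FA (K I : Type*) [Field K] : Type _ := MonoidAlgebra K (FreeMonoid I)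

variable {K I : Type*} [Field K] [Fintype I] [DecidableEq I]

/-- The generator `w_i` of the free algebra. -/
noncomputable def wgen (K : Type*) [Field K] {I : Type*} (i : I) : FA K I :=
  MonoidAlgebra.single (FreeMonoid.of i) 1

/-- `q_{α_i, ν}` where `ν` is the degree of the word `w` (here `w` is a list of
letters, and the degree records the number of occurrences of each letter). -/
noncomputable def qrow (qm : I → I → K) (i : I) (w : List I) : K :=
  ∏ k : I, qm i k ^ (w.count k)

/-- Auxiliary recursion for the quantum shuffle product of two basis words;
the arguments are the *reversed* words. It implements
`(x w_i) ⋆ (y w_j) = (x w_i ⋆ y) w_j + q_{α_i, ν+α_j} (x ⋆ y w_j) w_i`. -/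
noncomputable def shAux (qm : I → I → K) : List I → List I → FA K I
  | [], b => MonoidAlgebra.single (FreeMonoid.ofList b.reverse) 1
  | a, [] => MonoidAlgebra.single (FreeMonoid.ofList a.reverse) 1
  | i :: a', j :: b' =>
      shAux qm (i :: a') b' * MonoidAlgebra.single (FreeMonoid.of j) 1
        + (qrow qm i b' * qm i j) •
            (shAux qm a' (j :: b') * MonoidAlgebra.single (FreeMonoid.of i) 1)
  termination_by a b => a.length + b.length

/-- The quantum shuffle product `⋆` on the free algebra, extended bilinearly
from basis words. -/
noncomputable def shuffle (qm : I → I → K) (x y : FA K I) : FA K I :=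
  Finsupp.sum x.coeff fun a ca =>
    Finsupp.sum y.coeff fun b cb =>
      (ca * cb) • shAux qm (FreeMonoid.toList a).reverse (FreeMonoid.toList b).reverse

/-- The `m`-fold quantum shuffle power `w_i^{⋆m}`. -/
noncomputable def starPow (qm : I → I → K) (i : I) : ℕ → FA K I
  | 0 => 1
  | n + 1 => shuffle qm (starPow qm i n) (wgen K i)

/-- The action of `D_i` on a basis word: delete the last letter if it is `i`,
otherwise `0` (and `D_i 1 = 0`). -/
noncomputable def Dword (i : I) (w : List I) : FA K I :=
  match w.reverse with
  | [] => 0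
  | a :: r => if a = i then MonoidAlgebra.single (FreeMonoid.ofList r.reverse) 1 else 0

/-- The linear endomorphism `D_i` of `F` with `D_i(w_{i_1}⋯w_{i_k}) =
δ_{i,i_k} w_{i_1}⋯w_{i_{k-1}}` and `D_i(1) = 0`. -/
noncomputable def Dop (i : I) : FA K I →ₗ[K] FA K I :=
  (Finsupp.lsum K fun w =>
    LinearMap.toSpanSingleton K (FA K I) (Dword i (FreeMonoid.toList w)))
      ∘ₗ (MonoidAlgebra.coeffLinearEquiv K).toLinearMap


/-!
Both sides of the twisted Leibniz rule are bilinear in `(x, y)`, and the homogeneity of `y`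
only enters through the scalar `q_{α_i, deg y}`, so it suffices to check the rule on pairs of
words. No induction is needed there: the recursion for `(x w_{i'}) ⋆ (y w_j)` exposes the last
letter of each of its two terms, `D_i` just strips that letter, and the twist
`q_{α_{i'}, ν + α_j}` of the second term is `q_{α_i, deg (y w_j)}` when `i' = i`.
-/

theorem FreeMonoid.eq_one_or_exists_eq_mul_of {α : Type*} (a : FreeMonoid α) :
    a = 1 ∨ ∃ a' i, a = a' * FreeMonoid.of i := by
  rcases List.eq_nil_or_concat (FreeMonoid.toList a) with h | ⟨L, i, h⟩
  · exact .inl (FreeMonoid.toList.injective h)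
  · exact .inr ⟨FreeMonoid.ofList L, i, FreeMonoid.toList.injective (by simp [h])⟩

lemma qrow_append_singleton (qm : I → I → K) (i j : I) (l : List I) :
    qrow qm i (l ++ [j]) = qrow qm i l * qm i j := by
  simp only [qrow, List.count_append, pow_add, Finset.prod_mul_distrib]
  simp [List.count_singleton, pow_ite]

lemma qrow_reverse (qm : I → I → K) (i : I) (l : List I) :
    qrow qm i l.reverse = qrow qm i l := by
  simp [qrow, List.count_reverse]

lemma Dop_single {K I : Type*} [Field K] [DecidableEq I] (i : I) (w : FreeMonoid I) (c : K) :
    Dop i (MonoidAlgebra.single w c) = c • Dword i (FreeMonoid.toList w) := by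
  simp [Dop, MonoidAlgebra.coeffLinearEquiv_apply]

lemma Dop_one {K I : Type*} [Field K] [DecidableEq I] (i : I) : Dop i (1 : FA K I) = 0 := by
  simp [MonoidAlgebra.one_def, Dop_single, Dword]

lemma Dop_wgen {K I : Type*} [Field K] [DecidableEq I] (i j : I) :
    Dop i (wgen K j) = if i = j then (1 : FA K I) else 0 := by
  rw [wgen, Dop_single, one_smul]
  split_ifs with h <;> simp [Dword, MonoidAlgebra.one_def, h, Ne.symm]

lemma Dop_mul_of {K I : Type*} [Field K] [DecidableEq I] (i j : I) (x : FA K I) :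
    Dop i (x * MonoidAlgebra.single (FreeMonoid.of j) 1) = if j = i then x else 0 := by
  induction x using MonoidAlgebra.induction_linear with
  | zero => simp
  | add x y hx hy => rw [add_mul, map_add, hx, hy]; split_ifs <;> simp
  | single w c =>
    rw [MonoidAlgebra.single_mul_single, Dop_single]
    split_ifs <;> simp [Dword, *]

lemma Dop_single_mul_of {K I : Type*} [Field K] [DecidableEq I] (i j : I) (a : FreeMonoid I) :
    Dop i (MonoidAlgebra.single (a * .of j) (1 : K))
      = if j = i then MonoidAlgebra.single a 1 else 0 := by
  rw [← Dop_mul_of, MonoidAlgebra.single_mul_single, one_mul]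

lemma shAux_nil_right (qm : I → I → K) (a : List I) :
    shAux qm a [] = MonoidAlgebra.single (FreeMonoid.ofList a.reverse) 1 := by
  cases a <;> simp [shAux]

noncomputable def shuffleBilin (qm : I → I → K) : FA K I →ₗ[K] FA K I →ₗ[K] FA K I :=
  (MonoidAlgebra.basis (FreeMonoid I) K).constr K fun a =>
    (MonoidAlgebra.basis (FreeMonoid I) K).constr K fun b =>
      shAux qm (FreeMonoid.toList a).reverse (FreeMonoid.toList b).reverse

lemma shuffleBilin_apply (qm : I → I → K) (x y : FA K I) :
    shuffleBilin qm x y = shuffle qm x y := by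
  simp [shuffleBilin, shuffle, Module.Basis.constr_apply, Finsupp.smul_sum, mul_smul]
  rfl

lemma shuffleBilin_single_single (qm : I → I → K) (a b : FreeMonoid I) :
    shuffleBilin qm (MonoidAlgebra.single a 1) (MonoidAlgebra.single b 1)
      = shAux qm (FreeMonoid.toList a).reverse (FreeMonoid.toList b).reverse := by
  simp only [shuffleBilin, ← MonoidAlgebra.basis_apply, Module.Basis.constr_basis]

lemma shuffleBilin_one_left (qm : I → I → K) : shuffleBilin qm 1 = LinearMap.id := by
  refine MonoidAlgebra.lhom_ext' fun b => LinearMap.ext_ring ?_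
  simp [MonoidAlgebra.one_def, shuffleBilin_single_single, shAux]

lemma shuffleBilin_one_right (qm : I → I → K) : (shuffleBilin qm).flip 1 = LinearMap.id := by
  refine MonoidAlgebra.lhom_ext' fun a => LinearMap.ext_ring ?_
  simp [MonoidAlgebra.one_def, shuffleBilin_single_single, shAux_nil_right]

lemma shuffleBilin_mul_of_mul_of (qm : I → I → K) (a b : FreeMonoid I) (i j : I) :
    shuffleBilin qm (MonoidAlgebra.single (a * .of i) 1) (MonoidAlgebra.single (b * .of j) 1)
      = shuffleBilin qm (MonoidAlgebra.single (a * .of i) 1) (MonoidAlgebra.single b 1)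
          * MonoidAlgebra.single (.of j) 1
        + (qrow qm i (FreeMonoid.toList b) * qm i j) •
          (shuffleBilin qm (MonoidAlgebra.single a 1) (MonoidAlgebra.single (b * .of j) 1)
            * MonoidAlgebra.single (.of i) 1) := by
  simp only [shuffleBilin_single_single, FreeMonoid.toList_mul, FreeMonoid.toList_of,
    List.reverse_append, List.reverse_singleton, List.singleton_append]
  rw [shAux, qrow_reverse]

lemma Dop_shuffleBilin_single_single (qm : I → I → K) (i : I) (a b : FreeMonoid I) :
    Dop i (shuffleBilin qm (MonoidAlgebra.single a 1) (MonoidAlgebra.single b 1))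
      = qrow qm i (FreeMonoid.toList b) •
          shuffleBilin qm (Dop i (MonoidAlgebra.single a 1)) (MonoidAlgebra.single b 1)
        + shuffleBilin qm (MonoidAlgebra.single a 1) (Dop i (MonoidAlgebra.single b 1)) := by
  rcases a.eq_one_or_exists_eq_mul_of with rfl | ⟨a, i', rfl⟩
  · simp [← MonoidAlgebra.one_def, Dop_one, shuffleBilin_one_left]
  rcases b.eq_one_or_exists_eq_mul_of with rfl | ⟨b, j, rfl⟩
  · have h := LinearMap.congr_fun (shuffleBilin_one_right qm)
    simp only [LinearMap.flip_apply, LinearMap.id_apply] at h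
    simp [← MonoidAlgebra.one_def, Dop_one, h, qrow]
  rw [shuffleBilin_mul_of_mul_of, map_add, map_smul, Dop_mul_of, Dop_mul_of,
    Dop_single_mul_of, Dop_single_mul_of, FreeMonoid.toList_mul, FreeMonoid.toList_of,
    qrow_append_singleton]
  split_ifs <;> simp_all [add_comm]

lemma Dop_comp_shuffleBilin_flip_single (qm : I → I → K) (i : I) (b : FreeMonoid I) :
    Dop i ∘ₗ (shuffleBilin qm).flip (MonoidAlgebra.single b 1)
      = qrow qm i (FreeMonoid.toList b) •
          (shuffleBilin qm).flip (MonoidAlgebra.single b 1) ∘ₗ Dop i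
        + (shuffleBilin qm).flip (Dop i (MonoidAlgebra.single b 1)) :=
  MonoidAlgebra.lhom_ext' fun a => LinearMap.ext_ring <| by
    simpa using Dop_shuffleBilin_single_single qm i a b

/-- `D_i` is a twisted derivation for the quantum shuffle product:
`D_i(w_j) = δ_{ij}` and, for `x ∈ F` and homogeneous `y` of degree `μ`,
`D_i(x ⋆ y) = q_{α_i, μ} D_i(x) ⋆ y + x ⋆ D_i(y)`. -/
theorem Dop_twisted_derivation (qm : I → I → K) (i : I) :
    (∀ j : I, Dop i (wgen K j) = if i = j then (1 : FA K I) else 0) ∧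
    (∀ (x y : FA K I) (μ : I → ℕ),
      (∀ w ∈ y.coeff.support, ∀ k : I, (FreeMonoid.toList w).count k = μ k) →
      Dop i (shuffle qm x y)
        = (∏ k : I, qm i k ^ μ k) • shuffle qm (Dop i x) y
            + shuffle qm x (Dop i y)) := by
  refine ⟨Dop_wgen i, fun x y μ hy => ?_⟩
  set q := ∏ k : I, qm i k ^ μ k
  have hy_span : y ∈ Submodule.span K
      ((MonoidAlgebra.single · (1 : K)) '' {b | qrow qm i (FreeMonoid.toList b) = q}) := by
    rw [← MonoidAlgebra.supported_eq_span_single]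
    exact fun b hb => Finset.prod_congr rfl fun k _ => by rw [hy b hb k]
  simp only [← shuffleBilin_apply]
  refine LinearMap.eqOn_span' (f := Dop i ∘ₗ shuffleBilin qm x)
    (g := q • shuffleBilin qm (Dop i x) + shuffleBilin qm x ∘ₗ Dop i) ?_ hy_span
  rintro _ ⟨b, hb : qrow qm i (FreeMonoid.toList b) = q, rfl⟩
  simpa [hb] using LinearMap.congr_fun (Dop_comp_shuffleBilin_flip_single qm i b) x
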